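/- Let α = (I^g, α^g)_{g∈mor(𝒢)} be an associative partial action of a groupoid 𝒢 on an R-semicategory C. For each g ∈ mor(𝒢) set a(C)_g = ⊕_{x,y∈C₀} _yI^g_x ⊆ a(C) and let α_g : a(C)_{g⁻¹} → a(C)_g be the map induced componentwise by α^g. Then a(C)_{r(g)} is a two-sided ideal of a(C), a(C)_g is a two-sided ideal of a(C)_{r(g)}, each α_g is a ring isomorphism, and the family α_{a(C)} = (a(C)_g, α_g)_{g∈mor(𝒢)} is a partial action of 𝒢 on the ring a(C) (i.e. α_e = id_{a(C)_e} for e ∈ 𝒢₀, α_h⁻¹(a(C)_{g⁻¹} ∩ a(C)_h) ⊆ a(C)_{(gh)⁻¹}, and α_g(α_h(x)) = α_{gh}(x) for x ∈ α_h⁻¹(a(C)_{g⁻¹} ∩ a(C)_h), for every composable (g,h)). -/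

import Mathlib

open scoped Classical

noncomputable section

universe u u₂ v v' w w'

/-- A one-sorted (algebraic) groupoid: a set `G` of morphisms with a
partially defined multiplication (`comp g h` meaning `d g = r h`), a total
extension `mul` of it, and inversion. -/
structure AlgGroupoid (G : Type u₂) where
  mul : G → G → G
  inv : G → G
  comp : G → G → Prop
  comp_iff : ∀ g h, comp g h ↔ mul (inv g) g = mul h (inv h)
  mul_assoc' : ∀ g h k, comp g h → comp h k → mul (mul g h) k = mul g (mul h k)
  comp_mul_left : ∀ g h k, comp g h → comp h k → comp (mul g h) k
  comp_mul_right : ∀ g h k, comp g h → comp h k → comp g (mul h k)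
  inv_inv' : ∀ g, inv (inv g) = g
  comp_inv_left : ∀ g, comp (inv g) g
  comp_inv_right : ∀ g, comp g (inv g)
  inv_mul_cancel' : ∀ g h, comp g h → mul (inv g) (mul g h) = h
  mul_inv_cancel' : ∀ g h, comp g h → mul (mul g h) (inv h) = g
  inv_mul' : ∀ g h, comp g h → inv (mul g h) = mul (inv h) (inv g)

namespace AlgGroupoid

variable {G : Type u₂}

/-- The domain identity `d g = g⁻¹ g`. -/
def d (𝒢 : AlgGroupoid G) (g : G) : G := 𝒢.mul (𝒢.inv g) g

/-- The range identity `r g = g g⁻¹`. -/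
def r (𝒢 : AlgGroupoid G) (g : G) : G := 𝒢.mul g (𝒢.inv g)

/-- The set of identities `𝒢₀` of the groupoid. -/
def units (𝒢 : AlgGroupoid G) : Set G := {e | ∃ g, e = 𝒢.d g}

/-- A partial action of a groupoid `𝒢` on the subset `X` of the type `Y`:
the data is a family of domains `D g ⊆ X` and a (total extension of a)
family of maps `act g : D g⁻¹ → D g`. -/
def IsPartialActionOn {Y : Type v} (𝒢 : AlgGroupoid G)
    (X : Set Y) (D : G → Set Y) (act : G → Y → Y) : Prop :=
  (∀ g, D g ⊆ X) ∧
  (∀ g, D g ⊆ D (𝒢.r g)) ∧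
  (∀ x ∈ X, ∃ e ∈ 𝒢.units, x ∈ D e) ∧
  (∀ e ∈ 𝒢.units, ∀ x ∈ D e, act e x = x) ∧
  (∀ g, ∀ x ∈ D (𝒢.inv g), act g x ∈ D g) ∧
  (∀ g, ∀ x ∈ D (𝒢.inv g), act (𝒢.inv g) (act g x) = x) ∧
  (∀ g h, 𝒢.comp g h → act g '' (D (𝒢.inv g) ∩ D h) = D g ∩ D (𝒢.mul g h)) ∧
  (∀ g h, 𝒢.comp g h → ∀ x ∈ D (𝒢.inv h),
      act h x ∈ D (𝒢.inv g) ∩ D h → act g (act h x) = act (𝒢.mul g h) x)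

/-- A partial action of a groupoid on (all of) a set `Y`. -/
def IsSetPartialAction {Y : Type v} (𝒢 : AlgGroupoid G)
    (D : G → Set Y) (act : G → Y → Y) : Prop :=
  𝒢.IsPartialActionOn Set.univ D act

/-- A partial set action is global when `α_g ∘ α_h = α_{gh}` (as partially
defined maps) for every composable pair `(g, h)`. -/
def SetActionIsGlobal {Y : Type v} (𝒢 : AlgGroupoid G)
    (D : G → Set Y) (act : G → Y → Y) : Prop :=
  ∀ g h, 𝒢.comp g h →
    D (𝒢.inv (𝒢.mul g h)) = {x ∈ D (𝒢.inv h) | act h x ∈ D (𝒢.inv g)} ∧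
    ∀ x ∈ D (𝒢.inv (𝒢.mul g h)), act g (act h x) = act (𝒢.mul g h) x

end AlgGroupoid
/-- An `R`-semicategory with object type `Ob`: morphism `R`-modules
`Hom y x` (the morphisms *from `x` to `y`*, i.e. `_yC_x`) and an
associative `R`-bilinear composition (no identities required). -/
structure RSemicat (R : Type u) [CommRing R] (Ob : Type v) : Type (max u v (w + 1)) where
  Hom : Ob → Ob → Type w
  [homAdd : ∀ y x, AddCommGroup (Hom y x)]
  [homMod : ∀ y x, Module R (Hom y x)]
  comp : ∀ {z y x : Ob}, Hom z y → Hom y x → Hom z x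
  comp_assoc : ∀ {v z y x : Ob} (f : Hom v z) (g : Hom z y) (h : Hom y x),
      comp (comp f g) h = comp f (comp g h)
  comp_add_left : ∀ {z y x : Ob} (f f' : Hom z y) (g : Hom y x),
      comp (f + f') g = comp f g + comp f' g
  comp_add_right : ∀ {z y x : Ob} (f : Hom z y) (g g' : Hom y x),
      comp f (g + g') = comp f g + comp f g'
  comp_smul_left : ∀ {z y x : Ob} (c : R) (f : Hom z y) (g : Hom y x),
      comp (c • f) g = c • comp f g
  comp_smul_right : ∀ {z y x : Ob} (c : R) (f : Hom z y) (g : Hom y x),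
      comp f (c • g) = c • comp f g

attribute [instance] RSemicat.homAdd RSemicat.homMod

namespace RSemicat

variable {R : Type u} [CommRing R] {Ob : Type v}

theorem comp_zero_left (C : RSemicat.{u, v, w} R Ob) {z y x : Ob} (g : C.Hom y x) :
    C.comp (0 : C.Hom z y) g = 0 := by
  have h := C.comp_add_left (0 : C.Hom z y) 0 g
  rw [add_zero] at h
  exact left_eq_add.mp h

theorem comp_zero_right (C : RSemicat.{u, v, w} R Ob) {z y x : Ob} (f : C.Hom z y) :
    C.comp f (0 : C.Hom y x) = 0 := by
  have h := C.comp_add_right f (0 : C.Hom y x) 0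
  rw [add_zero] at h
  exact left_eq_add.mp h

/-- An ideal of an `R`-semicategory: a family of submodules closed under
composition with arbitrary morphisms on either side. -/
def IsIdeal (C : RSemicat R Ob) (I : ∀ y x : Ob, Submodule R (C.Hom y x)) : Prop :=
  (∀ (z y x : Ob) (u : C.Hom z y) (f : C.Hom y x), f ∈ I y x → C.comp u f ∈ I z x) ∧
  (∀ (z y x : Ob) (f : C.Hom z y) (u : C.Hom y x), f ∈ I z y → C.comp f u ∈ I z x)

/-- `J` is an ideal of the ideal `I`: `J ⊆ I` and `J` is closed under
composition with morphisms of `I` on either side. -/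
def IsIdealIn (C : RSemicat R Ob) (J I : ∀ y x : Ob, Submodule R (C.Hom y x)) : Prop :=
  (∀ y x, J y x ≤ I y x) ∧
  (∀ (z y x : Ob) (u : C.Hom z y) (f : C.Hom y x), u ∈ I z y → f ∈ J y x → C.comp u f ∈ J z x) ∧
  (∀ (z y x : Ob) (f : C.Hom z y) (u : C.Hom y x), f ∈ J z y → u ∈ I y x → C.comp f u ∈ J z x)

/-- `u ∈ _xI_x` is a local identity of the ideal `I` at the object `x`. -/
def IsLocalIdentity (C : RSemicat R Ob) (I : ∀ y x : Ob, Submodule R (C.Hom y x))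
    (x : Ob) (u : C.Hom x x) : Prop :=
  (∀ (y : Ob) (f : C.Hom x y), f ∈ I x y → C.comp u f = f) ∧
  (∀ (y : Ob) (f : C.Hom y x), f ∈ I y x → C.comp f u = f)

/-- `u ∈ _xI_x` is a left local identity of the ideal `I` at the object `x`. -/
def IsLeftLocalIdentity (C : RSemicat R Ob) (I : ∀ y x : Ob, Submodule R (C.Hom y x))
    (x : Ob) (u : C.Hom x x) : Prop :=
  ∀ (y : Ob) (f : C.Hom x y), f ∈ I x y → C.comp u f = f

/-- An `R`-semicategory is an `R`-category when every object has an
identity morphism. -/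
def HasIdentities (C : RSemicat R Ob) : Prop :=
  ∀ x : Ob, ∃ u : C.Hom x x,
    (∀ (y : Ob) (f : C.Hom x y), C.comp u f = f) ∧
    (∀ (y : Ob) (f : C.Hom y x), C.comp f u = f)

end RSemicat

/-- The raw data of a partial action of a groupoid (with morphism type `G`)
on an `R`-semicategory `C`: domains `D₀ g` and (total extensions of) maps
`act₀ g` on objects, a family of submodules `I g` (the ideals `I^g`) and
(total extensions of) maps `act g : I^{g⁻¹} → I^g` on morphisms. -/
structure SemicatActionData (R : Type u) [CommRing R] (G : Type u₂) {Ob : Type v}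
    (C : RSemicat.{u, v, w} R Ob) where
  D₀ : G → Set Ob
  act₀ : G → Ob → Ob
  I : G → ∀ y x : Ob, Submodule R (C.Hom y x)
  act : ∀ (g : G) {y x : Ob}, C.Hom y x → C.Hom (act₀ g y) (act₀ g x)

variable {R : Type u} [CommRing R] {G : Type u₂} {Ob : Type v}

/-- Definition of a partial action of a groupoid `𝒢` on an `R`-semicategory `C`. -/
def IsSemicatPartialAction (𝒢 : AlgGroupoid G) (C : RSemicat.{u, v, w} R Ob)
    (a : SemicatActionData R G C) : Prop :=
  -- (i) a partial action on the set of objects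
  𝒢.IsSetPartialAction a.D₀ a.act₀ ∧
  -- (ii) `_yI^g_x = 0` unless `{y, x} ⊆ C₀^g`
  (∀ (g : G) (y x : Ob), ¬(y ∈ a.D₀ g ∧ x ∈ a.D₀ g) → a.I g y x = ⊥) ∧
  -- `I^g ⊴ I^{r g} ⊴ C`
  (∀ g : G, C.IsIdealIn (a.I g) (a.I (𝒢.r g))) ∧
  (∀ g : G, C.IsIdeal (a.I (𝒢.r g))) ∧
  -- (iii) `α^g : I^{g⁻¹} → I^g` is an isomorphism of `R`-semicategories
  (∀ (g : G) (y x : Ob) (f : C.Hom y x), f ∈ a.I (𝒢.inv g) y x →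
      a.act g f ∈ a.I g (a.act₀ g y) (a.act₀ g x)) ∧
  (∀ (g : G) (y x : Ob) (f f' : C.Hom y x), f ∈ a.I (𝒢.inv g) y x →
      f' ∈ a.I (𝒢.inv g) y x → a.act g (f + f') = a.act g f + a.act g f') ∧
  (∀ (g : G) (y x : Ob) (c : R) (f : C.Hom y x), f ∈ a.I (𝒢.inv g) y x →
      a.act g (c • f) = c • a.act g f) ∧
  (∀ (g : G) (y x : Ob) (f f' : C.Hom y x), f ∈ a.I (𝒢.inv g) y x →
      f' ∈ a.I (𝒢.inv g) y x → a.act g f = a.act g f' → f = f') ∧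
  (∀ g : G, ∀ y ∈ a.D₀ (𝒢.inv g), ∀ x ∈ a.D₀ (𝒢.inv g),
      ∀ k ∈ a.I g (a.act₀ g y) (a.act₀ g x), ∃ f ∈ a.I (𝒢.inv g) y x, a.act g f = k) ∧
  (∀ (g : G) (z y x : Ob) (f : C.Hom z y) (f' : C.Hom y x), f ∈ a.I (𝒢.inv g) z y →
      f' ∈ a.I (𝒢.inv g) y x → a.act g (C.comp f f') = C.comp (a.act g f) (a.act g f')) ∧
  -- (iv) `α^e = id` on `I^e` for identities `e`
  (∀ e ∈ 𝒢.units, ∀ (y x : Ob) (f : C.Hom y x), f ∈ a.I e y x → HEq (a.act e f) f) ∧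
  -- (v)
  (∀ g h : G, 𝒢.comp g h → ∀ (y x : Ob) (f : C.Hom y x),
      f ∈ a.I h y x → f ∈ a.I (𝒢.inv g) y x →
      a.act (𝒢.inv h) f ∈
        a.I (𝒢.inv (𝒢.mul g h)) (a.act₀ (𝒢.inv h) y) (a.act₀ (𝒢.inv h) x)) ∧
  -- (vi) `α^g ∘ α^h = α^{gh}` on `α^{h⁻¹}(I^h ∩ I^{g⁻¹})`
  (∀ g h : G, 𝒢.comp g h → ∀ (y x : Ob) (f : C.Hom y x), f ∈ a.I (𝒢.inv h) y x →
      a.act h f ∈ a.I (𝒢.inv g) (a.act₀ h y) (a.act₀ h x) →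
      HEq (a.act g (a.act h f)) (a.act (𝒢.mul g h) f))

/-- A partial action of a groupoid on an `R`-semicategory is global when
`α^g ∘ α^h = α^{gh}` and `α₀^g ∘ α₀^h = α₀^{gh}` for every composable pair. -/
def SemicatActionIsGlobal (𝒢 : AlgGroupoid G) (C : RSemicat.{u, v, w} R Ob)
    (a : SemicatActionData R G C) : Prop :=
  𝒢.SetActionIsGlobal a.D₀ a.act₀ ∧
  ∀ g h : G, 𝒢.comp g h → ∀ (y x : Ob) (f : C.Hom y x),
    (f ∈ a.I (𝒢.inv (𝒢.mul g h)) y x ↔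
      f ∈ a.I (𝒢.inv h) y x ∧ a.act h f ∈ a.I (𝒢.inv g) (a.act₀ h y) (a.act₀ h x)) ∧
    (f ∈ a.I (𝒢.inv (𝒢.mul g h)) y x → HEq (a.act g (a.act h f)) (a.act (𝒢.mul g h) f))
section Skew

variable (𝒢 : AlgGroupoid G)

/-- The product of homogeneous components in the (possibly non-associative)
partial skew groupoid semicategory `C ∗_α 𝒢`:
for `f ∈ _zI^t_{ty}` and `l ∈ _yI^g_{gx}` the product is
`α^t(α^{t⁻¹}(f) ∘ l) ∈ _zI^{tg}_{(tg)x}` when `(t, g)` is composable and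
`x ∈ C₀^{(tg)⁻¹}`, and `0` otherwise. -/
def skewMul (C : RSemicat.{u, v, w} R Ob) (a : SemicatActionData R G C) (t g : G)
    {z y x : Ob} (f : C.Hom z (a.act₀ t y)) (l : C.Hom y (a.act₀ g x)) :
    C.Hom z (a.act₀ (𝒢.mul t g) x) :=
  if h : 𝒢.comp t g ∧ x ∈ a.D₀ (𝒢.inv (𝒢.mul t g)) ∧
      a.act₀ (𝒢.inv t) (a.act₀ t y) = y ∧ a.act₀ t (a.act₀ (𝒢.inv t) z) = z ∧
      a.act₀ t (a.act₀ g x) = a.act₀ (𝒢.mul t g) x then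
    cast (by rw [h.2.2.2.1, h.2.2.2.2])
      (a.act t (C.comp (cast (by rw [h.2.2.1]) (a.act (𝒢.inv t) f)) l))
  else 0

/-- Associativity of the partial skew groupoid semicategory `C ∗_α 𝒢`:
`(f l) k = f (l k)` on homogeneous components. -/
def SkewAssoc (C : RSemicat.{u, v, w} R Ob) (a : SemicatActionData R G C) : Prop :=
  ∀ (t g h : G) (z y x u : Ob),
    y ∈ a.D₀ (𝒢.inv t) → x ∈ a.D₀ (𝒢.inv g) → u ∈ a.D₀ (𝒢.inv h) →
    ∀ (f : C.Hom z (a.act₀ t y)) (l : C.Hom y (a.act₀ g x)) (k : C.Hom x (a.act₀ h u)),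
      f ∈ a.I t z (a.act₀ t y) → l ∈ a.I g y (a.act₀ g x) → k ∈ a.I h x (a.act₀ h u) →
      HEq (skewMul 𝒢 C a (𝒢.mul t g) h (skewMul 𝒢 C a t g f l) k)
          (skewMul 𝒢 C a t (𝒢.mul g h) f (skewMul 𝒢 C a g h l k))

end Skew

section Algebra

/-- The underlying module of the `R`-algebra `a(C) = ⊕_{x,y ∈ C₀} _yC_x`. -/
abbrev aHom (C : RSemicat.{u, v, w} R Ob) : Type (max v w) :=
  Π₀ p : Ob × Ob, C.Hom p.1 p.2

/-- The multiplication of the `R`-algebra `a(C)`: the matrix product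
induced by the composition of `C`. -/
def aMul (C : RSemicat.{u, v, w} R Ob) (F K : aHom C) : aHom C :=
  DFinsupp.sum F fun p v => DFinsupp.sum K fun q w =>
    if h : p.2 = q.1 then
      DFinsupp.single (⟨p.1, q.2⟩ : Ob × Ob) (C.comp v (cast (by rw [h]) w : C.Hom p.2 q.2))
    else 0

/-- `a(C)_g = ⊕_{x,y} _yI^g_x` as a subset of `a(C)`. -/
def aIdealSet (C : RSemicat.{u, v, w} R Ob) (a : SemicatActionData R G C) (g : G) :
    Set (aHom C) :=
  {F | ∀ p : Ob × Ob, F p ∈ a.I g p.1 p.2}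

/-- The map `a(C)_{g⁻¹} → a(C)_g` induced componentwise by `α^g`. -/
def aAct {C : RSemicat.{u, v, w} R Ob} (a : SemicatActionData R G C) (g : G)
    (F : aHom C) : aHom C :=
  DFinsupp.sum F fun p v =>
    DFinsupp.single (⟨a.act₀ g p.1, a.act₀ g p.2⟩ : Ob × Ob) (a.act g v)

/-- A multiplier `(Rm, Lm)` of the (possibly non-unital) "ring" given by a
multiplication `mul` on the subset `A` of an additive group `M`. -/
def IsMultiplierOn {M : Type*} [AddCommGroup M] (mul : M → M → M) (A : Set M)
    (Rm Lm : M → M) : Prop :=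
  (∀ a ∈ A, Rm a ∈ A) ∧ (∀ a ∈ A, Lm a ∈ A) ∧
  (∀ a ∈ A, ∀ b ∈ A, Rm (a + b) = Rm a + Rm b) ∧
  (∀ a ∈ A, ∀ b ∈ A, Lm (a + b) = Lm a + Lm b) ∧
  (∀ a ∈ A, ∀ b ∈ A, Rm (mul a b) = mul a (Rm b)) ∧
  (∀ a ∈ A, ∀ b ∈ A, Lm (mul a b) = mul (Lm a) b) ∧
  (∀ a ∈ A, ∀ b ∈ A, mul (Rm a) b = mul a (Lm b))

/-- `(L, R)`-associativity: for any two multipliers `(Rm, Lm)` and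
`(Rm', Lm')` one has `Rm ∘ Lm' = Lm' ∘ Rm`. -/
def IsLRAssocOn {M : Type*} [AddCommGroup M] (mul : M → M → M) (A : Set M) : Prop :=
  ∀ Rm Lm Rm' Lm', IsMultiplierOn mul A Rm Lm → IsMultiplierOn mul A Rm' Lm' →
    ∀ a ∈ A, Rm (Lm' a) = Lm' (Rm a)

/-- `J` is a two-sided ideal of the "ring" `I ⊆ M` (with multiplication `mul`). -/
def IsRingIdealPair {M : Type*} [AddCommGroup M] (mul : M → M → M) (J I : Set M) : Prop :=
  J ⊆ I ∧ (0 : M) ∈ J ∧ (∀ a ∈ J, ∀ b ∈ J, a + b ∈ J) ∧ (∀ a ∈ J, -a ∈ J) ∧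
  (∀ a ∈ I, ∀ b ∈ J, mul a b ∈ J ∧ mul b a ∈ J)

/-- A partial action of a groupoid `𝒢` on the (possibly non-unital) ring
`(M, mul)`: ideals `D (r g) ⊴ M`, `D g ⊴ D (r g)` and ring isomorphisms
`act g : D g⁻¹ → D g` satisfying the partial action axioms. -/
def IsRingPartialAction {M : Type*} [AddCommGroup M] (𝒢 : AlgGroupoid G)
    (mul : M → M → M) (D : G → Set M) (act : G → M → M) : Prop :=
  (∀ g, IsRingIdealPair mul (D (𝒢.r g)) Set.univ) ∧
  (∀ g, IsRingIdealPair mul (D g) (D (𝒢.r g))) ∧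
  (∀ g, ∀ x ∈ D (𝒢.inv g), act g x ∈ D g) ∧
  (∀ g, ∀ x ∈ D (𝒢.inv g), act (𝒢.inv g) (act g x) = x) ∧
  (∀ g, ∀ y ∈ D g, ∃ x ∈ D (𝒢.inv g), act g x = y) ∧
  (∀ g, ∀ x ∈ D (𝒢.inv g), ∀ y ∈ D (𝒢.inv g), act g (x + y) = act g x + act g y) ∧
  (∀ g, ∀ x ∈ D (𝒢.inv g), ∀ y ∈ D (𝒢.inv g), act g (mul x y) = mul (act g x) (act g y)) ∧
  (∀ e ∈ 𝒢.units, ∀ x ∈ D e, act e x = x) ∧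
  (∀ g h, 𝒢.comp g h → ∀ x, x ∈ D (𝒢.inv g) → x ∈ D h →
      act (𝒢.inv h) x ∈ D (𝒢.inv (𝒢.mul g h))) ∧
  (∀ g h, 𝒢.comp g h → ∀ x ∈ D (𝒢.inv h), act h x ∈ D (𝒢.inv g) →
      act g (act h x) = act (𝒢.mul g h) x)

/-- A partial ring action is global when `α_g ∘ α_h = α_{gh}` for every
composable pair. -/
def RingActionIsGlobal {M : Type*} (𝒢 : AlgGroupoid G)
    (D : G → Set M) (act : G → M → M) : Prop :=
  ∀ g h, 𝒢.comp g h →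
    (∀ x, x ∈ D (𝒢.inv (𝒢.mul g h)) ↔ x ∈ D (𝒢.inv h) ∧ act h x ∈ D (𝒢.inv g)) ∧
    (∀ x ∈ D (𝒢.inv (𝒢.mul g h)), act g (act h x) = act (𝒢.mul g h) x)

end Algebra
section Globalization

variable {Ob' : Type v'}

/-- Membership in the image ideal `φ(I)` (inside the semicategory `D`),
with the convention that its components vanish away from the image of `ι`. -/
def ImageMem (C : RSemicat.{u, v, w} R Ob) (D : RSemicat.{u, v', w'} R Ob') (ι : Ob → Ob')
    (I : ∀ y x : Ob, Submodule R (C.Hom y x))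
    (φ : ∀ {y x : Ob}, C.Hom y x → D.Hom (ι y) (ι x))
    {z x' : Ob'} (k : D.Hom z x') : Prop :=
  k = 0 ∨ ∃ (y x : Ob) (f : C.Hom y x), f ∈ I y x ∧ ι y = z ∧ ι x = x' ∧ HEq (φ f) k

/-- The data of a (candidate) globalization of a partial action on `C`:
a global action on the semicategory `D`, an inclusion `ι : C₀ → D₀` of object
sets, and semifunctors `φ_e : I^e → J^e` acting as `ι` on objects. -/
structure GlobalizationData (R : Type u) [CommRing R] (G : Type u₂) {Ob : Type v}
    {Ob' : Type v'} (C : RSemicat.{u, v, w} R Ob) (D : RSemicat.{u, v', w'} R Ob') where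
  b : SemicatActionData R G D
  ι : Ob → Ob'
  φ : ∀ (e : G) {y x : Ob}, C.Hom y x → D.Hom (ι y) (ι x)

/-- `(D, β, (φ_e))` is a globalization of the partial groupoid action
`(C, α)` (Definition 3.2 of the paper). -/
def IsGlobalization (𝒢 : AlgGroupoid G) (C : RSemicat.{u, v, w} R Ob)
    (a : SemicatActionData R G C) (D : RSemicat.{u, v', w'} R Ob')
    (gd : GlobalizationData R G C D) : Prop :=
  Function.Injective gd.ι ∧
  -- β is a global action of 𝒢 on D
  IsSemicatPartialAction 𝒢 D gd.b ∧
  SemicatActionIsGlobal 𝒢 D gd.b ∧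
  -- (i) the object-level action β₀ is a globalization of α₀
  (∀ e ∈ 𝒢.units, ∀ x : Ob, x ∈ a.D₀ e ↔ gd.ι x ∈ gd.b.D₀ e) ∧
  (∀ g : G, ∀ x : Ob, x ∈ a.D₀ g ↔
      (gd.ι x ∈ gd.b.D₀ (𝒢.r g) ∧
        ∃ x' : Ob, gd.ι x' ∈ gd.b.D₀ (𝒢.d g) ∧ gd.b.act₀ g (gd.ι x') = gd.ι x)) ∧
  (∀ g : G, ∀ x ∈ a.D₀ (𝒢.inv g), gd.ι (a.act₀ g x) = gd.b.act₀ g (gd.ι x)) ∧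
  -- (ii) each φ_e is a faithful semifunctor with φ_e(I^e) ⊴ J^e
  (∀ e ∈ 𝒢.units,
    (∀ (y x : Ob) (f f' : C.Hom y x), f ∈ a.I e y x → f' ∈ a.I e y x →
        gd.φ e (f + f') = gd.φ e f + gd.φ e f') ∧
    (∀ (y x : Ob) (c : R) (f : C.Hom y x), f ∈ a.I e y x →
        gd.φ e (c • f) = c • gd.φ e f) ∧
    (∀ (z y x : Ob) (f : C.Hom z y) (f' : C.Hom y x), f ∈ a.I e z y → f' ∈ a.I e y x →
        gd.φ e (C.comp f f') = D.comp (gd.φ e f) (gd.φ e f')) ∧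
    (∀ (y x : Ob) (f f' : C.Hom y x), f ∈ a.I e y x → f' ∈ a.I e y x →
        gd.φ e f = gd.φ e f' → f = f') ∧
    (∀ (y x : Ob) (f : C.Hom y x), f ∈ a.I e y x →
        gd.φ e f ∈ gd.b.I e (gd.ι y) (gd.ι x))) ∧
  (∀ e ∈ 𝒢.units, ∀ (w z x' : Ob') (u : D.Hom w z) (k : D.Hom z x'),
      u ∈ gd.b.I e w z → ImageMem C D gd.ι (a.I e) (gd.φ e) k →
      ImageMem C D gd.ι (a.I e) (gd.φ e) (D.comp u k)) ∧
  (∀ e ∈ 𝒢.units, ∀ (z x' w : Ob') (k : D.Hom z x') (u : D.Hom x' w),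
      ImageMem C D gd.ι (a.I e) (gd.φ e) k → u ∈ gd.b.I e x' w →
      ImageMem C D gd.ι (a.I e) (gd.φ e) (D.comp k u)) ∧
  -- (iii) φ_{r g}(_yI^g_x) = φ_{r g}(_yI^{r g}_x) ∩ β^g(φ_{d g}(_{g⁻¹y}I^{d g}_{g⁻¹x}))
  (∀ g : G, ∀ y ∈ a.D₀ g, ∀ x ∈ a.D₀ g, ∀ k : D.Hom (gd.ι y) (gd.ι x),
      (∃ f ∈ a.I g y x, gd.φ (𝒢.r g) f = k) ↔
        ((∃ f ∈ a.I (𝒢.r g) y x, gd.φ (𝒢.r g) f = k) ∧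
          ∃ f' : C.Hom (a.act₀ (𝒢.inv g) y) (a.act₀ (𝒢.inv g) x),
            f' ∈ a.I (𝒢.d g) (a.act₀ (𝒢.inv g) y) (a.act₀ (𝒢.inv g) x) ∧
            HEq (gd.b.act g (gd.φ (𝒢.d g) f')) k)) ∧
  -- (iv) β^g ∘ φ_{d g} = φ_{r g} ∘ α^g on I^{g⁻¹}
  (∀ (g : G) (y x : Ob) (f : C.Hom y x), f ∈ a.I (𝒢.inv g) y x →
      HEq (gd.b.act g (gd.φ (𝒢.d g) f)) (gd.φ (𝒢.r g) (a.act g f))) ∧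
  -- (v) _yJ^g_x = Σ_{r h = r g} β^h(φ_{d h}(_{h⁻¹y}I^{d h}_{h⁻¹x}))
  (∀ (g : G) (y x : Ob'), gd.b.I g y x = Submodule.span R
      {m : D.Hom y x | ∃ h : G, 𝒢.r h = 𝒢.r g ∧
        ∃ (y' x' : Ob) (f : C.Hom y' x'), f ∈ a.I (𝒢.d h) y' x' ∧
          gd.ι y' = gd.b.act₀ (𝒢.inv h) y ∧ gd.ι x' = gd.b.act₀ (𝒢.inv h) x ∧
          HEq (gd.b.act h (gd.φ (𝒢.d h) f)) m})

/-- The ring homomorphism `ψ_e : a(C) → a(D)` induced componentwise by a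
semifunctor `φ_e`. -/
def aPhiRing {C : RSemicat.{u, v, w} R Ob} {D : RSemicat.{u, v', w'} R Ob'}
    (ι : Ob → Ob') (φ : ∀ (e : G) {y x : Ob}, C.Hom y x → D.Hom (ι y) (ι x))
    (e : G) (F : aHom C) : aHom D :=
  DFinsupp.sum F fun p v => DFinsupp.single (⟨ι p.1, ι p.2⟩ : Ob' × Ob') (φ e v)

/-- A global action `(DN, actN)` of `𝒢` on the ring `(N, mulN)` is a
globalization of the partial ring action `(DM, actM)` of `𝒢` on `(M, mulM)`
via the ring monomorphisms `ψ_e` (Definition 3.1 of the paper). -/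
def IsRingGlobalization {M N : Type*} [AddCommGroup M] [AddCommGroup N]
    (𝒢 : AlgGroupoid G)
    (mulM : M → M → M) (DM : G → Set M) (actM : G → M → M)
    (mulN : N → N → N) (DN : G → Set N) (actN : G → N → N)
    (ψ : G → M → N) : Prop :=
  IsRingPartialAction 𝒢 mulN DN actN ∧
  RingActionIsGlobal 𝒢 DN actN ∧
  (∀ e ∈ 𝒢.units,
    (∀ x ∈ DM e, ψ e x ∈ DN e) ∧
    (∀ x ∈ DM e, ∀ y ∈ DM e, ψ e (x + y) = ψ e x + ψ e y) ∧
    (∀ x ∈ DM e, ∀ y ∈ DM e, ψ e (mulM x y) = mulN (ψ e x) (ψ e y)) ∧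
    (∀ x ∈ DM e, ∀ y ∈ DM e, ψ e x = ψ e y → x = y) ∧
    -- (i) ψ_e(A_e) is an ideal of B_e
    IsRingIdealPair mulN (ψ e '' DM e) (DN e)) ∧
  -- (ii)
  (∀ g : G, ψ (𝒢.r g) '' DM g =
      (ψ (𝒢.r g) '' DM (𝒢.r g)) ∩ (actN g '' (ψ (𝒢.d g) '' DM (𝒢.d g)))) ∧
  -- (iii)
  (∀ g : G, ∀ x ∈ DM (𝒢.inv g), actN g (ψ (𝒢.d g) x) = ψ (𝒢.r g) (actM g x)) ∧
  -- (iv)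
  (∀ g : G, ∀ k : N, k ∈ DN g ↔ k ∈ AddSubgroup.closure
      {m : N | ∃ h : G, 𝒢.r h = 𝒢.r g ∧ ∃ F ∈ DM (𝒢.d h), m = actN h (ψ (𝒢.d h) F)})

end Globalization

section Orbits

/-- The orbit relation induced by a partial action of a groupoid: `e ∼ f`
iff `f = g e` for some morphism `g` with `e` in the domain of `α_g`. -/
def orbRel {Y : Type*} (𝒢 : AlgGroupoid G) (D : G → Set Y) (act : G → Y → Y)
    (e f : Y) : Prop :=
  ∃ g : G, e ∈ D (𝒢.inv g) ∧ act g e = f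

/-- `C(ρ,τ)_g = ⊕_{x ∈ ρ, y ∈ τ} _yI^g_x`, realized inside `a(C)`. -/
def CSet (C : RSemicat.{u, v, w} R Ob) (a : SemicatActionData R G C)
    (ρ τ : Set Ob) (g : G) : Set (aHom C) :=
  {F | ∀ p : Ob × Ob, F p ∈ a.I g p.1 p.2 ∧ (F p ≠ 0 → p.1 ∈ τ ∧ p.2 ∈ ρ)}

end Orbits
section SkewCatAlgebra

/-- The morphism module `_y(C∗_α𝒢)_x = ⊕_{g} _yI^g_{gx}` of the partial skew
groupoid semicategory (realized as a direct sum over all of `G`; the genuine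
morphisms are those supported on `𝒢^x` with components in `I^g`). -/
abbrev SkewHomT (C : RSemicat.{u, v, w} R Ob) (a : SemicatActionData R G C)
    (y x : Ob) : Type (max u₂ w) :=
  Π₀ g : G, C.Hom y (a.act₀ g x)

/-- Composition in the partial skew groupoid semicategory `C∗_α𝒢`. -/
def skewHomMul (𝒢 : AlgGroupoid G) (C : RSemicat.{u, v, w} R Ob)
    (a : SemicatActionData R G C) {z y x : Ob}
    (F : SkewHomT C a z y) (K : SkewHomT C a y x) : SkewHomT C a z x :=
  DFinsupp.sum F fun t f => DFinsupp.sum K fun g l =>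
    DFinsupp.single (𝒢.mul t g) (skewMul 𝒢 C a t g f l)

/-- The underlying module of the algebra `a(C∗_α𝒢)`. -/
abbrev aSkewT (C : RSemicat.{u, v, w} R Ob) (a : SemicatActionData R G C) :
    Type (max v u₂ w) :=
  Π₀ p : Ob × Ob, SkewHomT C a p.1 p.2

/-- The multiplication of the algebra `a(C∗_α𝒢)`. -/
def aSkewMul (𝒢 : AlgGroupoid G) (C : RSemicat.{u, v, w} R Ob)
    (a : SemicatActionData R G C) (F K : aSkewT C a) : aSkewT C a :=
  DFinsupp.sum F fun p u => DFinsupp.sum K fun q v =>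
    if h : p.2 = q.1 then
      DFinsupp.single (⟨p.1, q.2⟩ : Ob × Ob)
        (skewHomMul 𝒢 C a u (cast (by rw [h]) v : SkewHomT C a p.2 q.2))
    else 0

/-- The set of genuine elements of `a(C∗_α𝒢)` inside `aSkewT`. -/
def aSkewSet (𝒢 : AlgGroupoid G) (C : RSemicat.{u, v, w} R Ob)
    (a : SemicatActionData R G C) : Set (aSkewT C a) :=
  {F | ∀ (p : Ob × Ob) (g : G), F p g ∈ a.I g p.1 (a.act₀ g p.2) ∧
    (p.2 ∉ a.D₀ (𝒢.inv g) → F p g = 0)}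

/-- The underlying module of the partial skew groupoid ring
`a(C)∗_α𝒢 = ⊕_g a(C)_g δ_g`. -/
abbrev sRingT (G : Type u₂) (C : RSemicat.{u, v, w} R Ob) : Type (max v u₂ w) :=
  Π₀ _g : G, aHom C

/-- The multiplication of the partial skew groupoid ring `a(C)∗_α𝒢`:
`(a_g δ_g)(b_h δ_h) = α_g(α_{g⁻¹}(a_g) b_h) δ_{gh}` when `(g,h)` is
composable, and `0` otherwise. -/
def sRingMul (𝒢 : AlgGroupoid G) (C : RSemicat.{u, v, w} R Ob)
    (a : SemicatActionData R G C) (F K : sRingT G C) : sRingT G C :=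
  DFinsupp.sum F fun g ag => DFinsupp.sum K fun h bh =>
    if 𝒢.comp g h then
      DFinsupp.single (𝒢.mul g h) (aAct a g (aMul C (aAct a (𝒢.inv g) ag) bh))
    else 0

/-- The set of genuine elements of `a(C)∗_α𝒢` inside `sRingT`. -/
def sRingSet (C : RSemicat.{u, v, w} R Ob) (a : SemicatActionData R G C) :
    Set (sRingT G C) :=
  {K | ∀ (g : G) (p : Ob × Ob), K g p ∈ a.I g p.1 p.2}

/-- The isomorphism `a(C∗_α𝒢) → a(C)∗_α𝒢`, `f_g ↦ f_g δ_g`. -/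
def aPhi (C : RSemicat.{u, v, w} R Ob) (a : SemicatActionData R G C)
    (F : aSkewT C a) : sRingT G C :=
  DFinsupp.sum F fun p u => DFinsupp.sum u fun g f =>
    DFinsupp.single g (DFinsupp.single (⟨p.1, a.act₀ g p.2⟩ : Ob × Ob) f)

end SkewCatAlgebra

section Graded

/-- A `𝒢`-grading of an `R`-semicategory `B`: decompositions
`_yB_x = ⊕_{g} _yB_x^g` such that `_zB_y^t ⬝ _yB_x^s ⊆ _zB_x^{ts}` when
`d t = r s` and `_zB_y^t ⬝ _yB_x^s = 0` otherwise. -/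
def IsGrading (𝒢 : AlgGroupoid G) (B : RSemicat.{u, v, w} R Ob)
    (deco : ∀ y x : Ob, G → Submodule R (B.Hom y x)) : Prop :=
  (∀ y x : Ob, DirectSum.IsInternal fun g : G => deco y x g) ∧
  (∀ (z y x : Ob) (t s : G), 𝒢.comp t s → ∀ u ∈ deco z y t, ∀ v ∈ deco y x s,
      B.comp u v ∈ deco z x (𝒢.mul t s)) ∧
  (∀ (z y x : Ob) (t s : G), ¬ 𝒢.comp t s → ∀ u ∈ deco z y t, ∀ v ∈ deco y x s,
      B.comp u v = 0)

/-- The morphism submodule `_{(y,t)}(B#𝒢)_{(x,s)}` of the smash product: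
`_yB_x^{t⁻¹ s}` when `r t = r s`, and `0` otherwise. -/
def smashMod (𝒢 : AlgGroupoid G) (B : RSemicat.{u, v, w} R Ob)
    (deco : ∀ y x : Ob, G → Submodule R (B.Hom y x))
    (yt xs : Ob × G) : Submodule R (B.Hom yt.1 xs.1) :=
  if 𝒢.r yt.2 = 𝒢.r xs.2 then deco yt.1 xs.1 (𝒢.mul (𝒢.inv yt.2) xs.2) else ⊥

/-- The smash product `R`-semicategory `B#𝒢`. -/
def Smash (𝒢 : AlgGroupoid G) (B : RSemicat.{u, v, w} R Ob)
    (deco : ∀ y x : Ob, G → Submodule R (B.Hom y x))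
    (hgr : IsGrading 𝒢 B deco) :
    RSemicat.{u, max v u₂, w} R (Ob × G) where
  Hom yt xs := ↥(smashMod 𝒢 B deco yt xs)
  comp {z y x} f g := ⟨B.comp f.1 g.1, by
    obtain ⟨fv, hf⟩ := f
    obtain ⟨gv, hg⟩ := g
    show B.comp fv gv ∈ smashMod 𝒢 B deco z x
    unfold smashMod at hf hg ⊢
    by_cases h1 : 𝒢.r z.2 = 𝒢.r y.2
    · by_cases h2 : 𝒢.r y.2 = 𝒢.r x.2
      · rw [if_pos h1] at hf
        rw [if_pos h2] at hg
        rw [if_pos (h1.trans h2)]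
        have c1 : 𝒢.comp (𝒢.inv z.2) y.2 :=
          (𝒢.comp_iff _ _).2 (by rw [𝒢.inv_inv']; exact h1)
        have c2 : 𝒢.comp (𝒢.inv y.2) x.2 :=
          (𝒢.comp_iff _ _).2 (by rw [𝒢.inv_inv']; exact h2)
        have ccy : 𝒢.comp y.2 (𝒢.inv y.2) := 𝒢.comp_inv_right y.2
        have ccyc : 𝒢.comp y.2 (𝒢.mul (𝒢.inv y.2) x.2) :=
          𝒢.comp_mul_right y.2 (𝒢.inv y.2) x.2 ccy c2
        have hcomp : 𝒢.comp (𝒢.mul (𝒢.inv z.2) y.2) (𝒢.mul (𝒢.inv y.2) x.2) :=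
          𝒢.comp_mul_left (𝒢.inv z.2) y.2 (𝒢.mul (𝒢.inv y.2) x.2) c1 ccyc
        have hmem := hgr.2.1 z.1 y.1 x.1 (𝒢.mul (𝒢.inv z.2) y.2)
          (𝒢.mul (𝒢.inv y.2) x.2) hcomp fv hf gv hg
        have h2' : 𝒢.mul y.2 (𝒢.inv y.2) = 𝒢.mul x.2 (𝒢.inv x.2) := h2
        have s5 : 𝒢.mul x.2 (𝒢.mul (𝒢.inv x.2) x.2) = x.2 := by
          have h5 := 𝒢.inv_mul_cancel' (𝒢.inv x.2) x.2 (𝒢.comp_inv_left x.2)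
          rwa [𝒢.inv_inv'] at h5
        have hidx : 𝒢.mul (𝒢.mul (𝒢.inv z.2) y.2) (𝒢.mul (𝒢.inv y.2) x.2) =
            𝒢.mul (𝒢.inv z.2) x.2 := by
          rw [𝒢.mul_assoc' (𝒢.inv z.2) y.2 (𝒢.mul (𝒢.inv y.2) x.2) c1 ccyc,
            ← 𝒢.mul_assoc' y.2 (𝒢.inv y.2) x.2 ccy c2, h2',
            𝒢.mul_assoc' x.2 (𝒢.inv x.2) x.2 (𝒢.comp_inv_right x.2) (𝒢.comp_inv_left x.2),
            s5]
        rw [hidx] at hmem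
        exact hmem
      · rw [if_neg h2] at hg
        have hg0 : gv = 0 := by simpa using hg
        rw [hg0, B.comp_zero_right]
        exact Submodule.zero_mem _
    · rw [if_neg h1] at hf
      have hf0 : fv = 0 := by simpa using hf
      rw [hf0, B.comp_zero_left]
      exact Submodule.zero_mem _⟩
  comp_assoc f g h := Subtype.ext (B.comp_assoc f.1 g.1 h.1)
  comp_add_left f f' g := Subtype.ext (B.comp_add_left f.1 f'.1 g.1)
  comp_add_right f g g' := Subtype.ext (B.comp_add_right f.1 g.1 g'.1)
  comp_smul_left c f g := Subtype.ext (B.comp_smul_left c f.1 g.1)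
  comp_smul_right c f g := Subtype.ext (B.comp_smul_right c f.1 g.1)

/-- The object part of the global action of `𝒢` on `B#𝒢`:
`α₀^g (x, s) = (x, g s)`. -/
def smashAct₀ (𝒢 : AlgGroupoid G) (g : G) (p : Ob × G) : Ob × G :=
  (p.1, 𝒢.mul g p.2)

/-- The global action of `𝒢` on the smash product `B#𝒢` (domains
`B₀ × 𝒢(-, r g)`, `α₀^g(x,s) = (x, gs)`, ideals `_{(y,t)}I^g_{(x,s)}`
given by `_yB_x^{t⁻¹s}` when `r t = r s = r g` and `0` otherwise, and `α^g`
given by the identity on the underlying morphisms of `B`). -/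
def smashActionData (𝒢 : AlgGroupoid G) (B : RSemicat.{u, v, w} R Ob)
    (deco : ∀ y x : Ob, G → Submodule R (B.Hom y x))
    (hgr : IsGrading 𝒢 B deco) :
    SemicatActionData R G (Smash 𝒢 B deco hgr) where
  D₀ g := {p : Ob × G | 𝒢.r p.2 = 𝒢.r g}
  act₀ := smashAct₀ 𝒢
  I g yt xs := if 𝒢.r yt.2 = 𝒢.r g ∧ 𝒢.r xs.2 = 𝒢.r g then ⊤ else ⊥
  act g {yt xs} f :=
    if h : (f.1 : B.Hom yt.1 xs.1) ∈
        smashMod 𝒢 B deco (smashAct₀ 𝒢 g yt) (smashAct₀ 𝒢 g xs) then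
      ⟨f.1, h⟩
    else 0

end Graded


/-! An element of `a(C)_g` is a finite sum of homogeneous elements `f` at `(y, x)` with
`f ∈ _yI^g_x`, and `α_g` sends such an element to `α^g(f)` at `(g y, g x)`. Since `α₀^g` is
injective on `C₀^{g⁻¹}`, distinct components go to distinct components, so every axiom of a
partial action on `a(C)` reduces, summand by summand, to the corresponding axiom for `α` on
`C`; for multiplicativity one reduces to products of two homogeneous elements, which are
composites or zero. -/

namespace AlgGroupoid

variable {𝒢 : AlgGroupoid G}

lemma r_inv (g : G) : 𝒢.r (𝒢.inv g) = 𝒢.d g := by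
  rw [r, d, 𝒢.inv_inv']

namespace IsPartialActionOn

variable {Y : Type v} {X : Set Y} {D : G → Set Y} {act : G → Y → Y}

lemma act_unit (hα : 𝒢.IsPartialActionOn X D act) {e : G} (he : e ∈ 𝒢.units) {x : Y}
    (hx : x ∈ D e) : act e x = x :=
  hα.2.2.2.1 e he x hx

lemma act_mem (hα : 𝒢.IsPartialActionOn X D act) {g : G} {x : Y} (hx : x ∈ D (𝒢.inv g)) :
    act g x ∈ D g :=
  hα.2.2.2.2.1 g x hx

lemma act_inv_act (hα : 𝒢.IsPartialActionOn X D act) {g : G} {x : Y}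
    (hx : x ∈ D (𝒢.inv g)) : act (𝒢.inv g) (act g x) = x :=
  hα.2.2.2.2.2.1 g x hx

lemma act_injOn (hα : 𝒢.IsPartialActionOn X D act) (g : G) :
    Set.InjOn (act g) (D (𝒢.inv g)) :=
  fun x hx x' hx' h => by rw [← hα.act_inv_act hx, h, hα.act_inv_act hx']

lemma act_act (hα : 𝒢.IsPartialActionOn X D act) {g h : G} (hc : 𝒢.comp g h) {x : Y}
    (hx : x ∈ D (𝒢.inv h)) (hhx : act h x ∈ D (𝒢.inv g)) :
    act g (act h x) = act (𝒢.mul g h) x :=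
  hα.2.2.2.2.2.2.2 g h hc x hx ⟨hhx, hα.act_mem hx⟩

end IsPartialActionOn

end AlgGroupoid

namespace RSemicat

variable {C : RSemicat.{u, v, w} R Ob}

lemma IsIdeal.isIdealIn_top {I : ∀ y x : Ob, Submodule R (C.Hom y x)} (hI : C.IsIdeal I) :
    C.IsIdealIn I (fun _ _ => ⊤) :=
  ⟨fun _ _ => le_top, fun z y x u f _ hf => hI.1 z y x u f hf,
    fun z y x f u hf _ => hI.2 z y x f u hf⟩

end RSemicat

section

variable {C : RSemicat.{u, v, w} R Ob}

def aAddSubgroup (C : RSemicat.{u, v, w} R Ob) (J : ∀ y x : Ob, Submodule R (C.Hom y x)) :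
    AddSubgroup (aHom C) where
  carrier := {F | ∀ p : Ob × Ob, F p ∈ J p.1 p.2}
  zero_mem' _ := zero_mem _
  add_mem' hF hK p := add_mem (hF p) (hK p)
  neg_mem' hF p := neg_mem (hF p)

lemma coe_aAddSubgroup_top : (aAddSubgroup C (fun _ _ => ⊤) : Set (aHom C)) = Set.univ :=
  Set.eq_univ_of_forall fun _ _ => Submodule.mem_top

lemma single_mem_aAddSubgroup {J : ∀ y x : Ob, Submodule R (C.Hom y x)} {p : Ob × Ob}
    {v : C.Hom p.1 p.2} (hv : v ∈ J p.1 p.2) : DFinsupp.single p v ∈ aAddSubgroup C J := by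
  intro q
  rcases eq_or_ne p q with rfl | hne
  · rwa [DFinsupp.single_eq_same]
  · rw [DFinsupp.single_eq_of_ne hne.symm]
    exact zero_mem _

lemma single_eq_single_of_heq {p q : Ob × Ob} {v : C.Hom p.1 p.2} {w : C.Hom q.1 q.2}
    (h₁ : p.1 = q.1) (h₂ : p.2 = q.2) (hvw : HEq v w) :
    (DFinsupp.single p v : aHom C) = DFinsupp.single q w := by
  obtain ⟨p₁, p₂⟩ := p
  obtain ⟨q₁, q₂⟩ := q
  subst h₁ h₂
  rw [eq_of_heq hvw]

lemma aMul_single_single (p q : Ob × Ob) (v : C.Hom p.1 p.2) (w : C.Hom q.1 q.2) :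
    aMul C (DFinsupp.single p v) (DFinsupp.single q w) =
      if h : p.2 = q.1 then
        DFinsupp.single (⟨p.1, q.2⟩ : Ob × Ob) (C.comp v (cast (by rw [h]) w))
      else 0 := by
  obtain ⟨p₁, p₂⟩ := p
  obtain ⟨q₁, q₂⟩ := q
  rw [aMul, DFinsupp.sum_single_index, DFinsupp.sum_single_index]
  · dsimp only
    split_ifs with h
    · subst h
      rw [cast_eq, C.comp_zero_right, DFinsupp.single_zero]
    · rfl
  · refine DFinsupp.sum_eq_zero fun q => ?_
    split_ifs
    · rw [C.comp_zero_left, DFinsupp.single_zero]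
    · rfl

lemma aMul_eq_sum (F K : aHom C) :
    aMul C F K = ∑ p ∈ F.support, ∑ q ∈ K.support,
      aMul C (DFinsupp.single p (F p)) (DFinsupp.single q (K q)) := by
  simp only [aMul_single_single]
  rfl

lemma aMul_mem_aAddSubgroup {J K L : ∀ y x : Ob, Submodule R (C.Hom y x)}
    (hcomp : ∀ (z y x : Ob) (u : C.Hom z y) (f : C.Hom y x), u ∈ J z y → f ∈ K y x →
      C.comp u f ∈ L z x)
    {F F' : aHom C} (hF : F ∈ aAddSubgroup C J) (hF' : F' ∈ aAddSubgroup C K) :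
    aMul C F F' ∈ aAddSubgroup C L := by
  rw [aMul_eq_sum]
  refine sum_mem fun p _ => sum_mem fun q _ => ?_
  rw [aMul_single_single]
  split_ifs with h
  · obtain ⟨p₁, p₂⟩ := p
    obtain ⟨q₁, q₂⟩ := q
    dsimp only at h
    subst h
    refine single_mem_aAddSubgroup (hcomp _ _ _ _ _ (hF (p₁, p₂)) ?_)
    rw [cast_eq]
    exact hF' (p₂, q₂)
  · exact zero_mem _

lemma RSemicat.IsIdealIn.isRingIdealPair {J I : ∀ y x : Ob, Submodule R (C.Hom y x)}
    (h : C.IsIdealIn J I) :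
    IsRingIdealPair (aMul C) (aAddSubgroup C J) (aAddSubgroup C I) :=
  ⟨fun _ hF p => h.1 _ _ (hF p), zero_mem _, fun _ hF _ hK => add_mem hF hK,
    fun _ hF => neg_mem hF,
    fun _ hF _ hK => ⟨aMul_mem_aAddSubgroup h.2.1 hF hK, aMul_mem_aAddSubgroup h.2.2 hK hF⟩⟩

lemma aMul_add_left (F F' K : aHom C) : aMul C (F + F') K = aMul C F K + aMul C F' K := by
  refine DFinsupp.sum_add_index (fun p => DFinsupp.sum_eq_zero fun q => ?_)
    fun p v v' => ?_
  · split_ifs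
    · rw [C.comp_zero_left, DFinsupp.single_zero]
    · rfl
  · rw [← DFinsupp.sum_add]
    refine Finset.sum_congr rfl fun q _ => ?_
    dsimp only
    split_ifs
    · rw [C.comp_add_left, DFinsupp.single_add]
    · rw [add_zero]

lemma aMul_add_right (F K K' : aHom C) : aMul C F (K + K') = aMul C F K + aMul C F K' := by
  rw [aMul, aMul, aMul, ← DFinsupp.sum_add]
  refine Finset.sum_congr rfl fun p _ => DFinsupp.sum_add_index (fun q => ?_) fun q w w' => ?_
  · split_ifs with h
    · obtain ⟨p₁, p₂⟩ := p
      obtain ⟨q₁, q₂⟩ := q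
      dsimp only at h
      subst h
      rw [cast_eq, C.comp_zero_right, DFinsupp.single_zero]
    · rfl
  · split_ifs with h
    · obtain ⟨p₁, p₂⟩ := p
      obtain ⟨q₁, q₂⟩ := q
      dsimp only at h
      subst h
      rw [cast_eq, cast_eq, cast_eq, C.comp_add_right, DFinsupp.single_add]
    · rw [add_zero]

lemma aMul_sum_left {ι : Type*} (s : Finset ι) (f : ι → aHom C) (K : aHom C) :
    aMul C (∑ i ∈ s, f i) K = ∑ i ∈ s, aMul C (f i) K :=
  map_sum (AddMonoidHom.mk' (aMul C · K) (aMul_add_left · · K)) f s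

lemma aMul_sum_right {ι : Type*} (s : Finset ι) (F : aHom C) (f : ι → aHom C) :
    aMul C F (∑ i ∈ s, f i) = ∑ i ∈ s, aMul C F (f i) :=
  map_sum (AddMonoidHom.mk' (aMul C F) (aMul_add_right F)) f s

variable {a : SemicatActionData R G C}

lemma aAct_zero (g : G) : aAct a g (0 : aHom C) = 0 :=
  DFinsupp.sum_zero_index

lemma aAct_mem_aAddSubgroup {g : G} {F : aHom C} {J : ∀ y x : Ob, Submodule R (C.Hom y x)}
    (h : ∀ p : Ob × Ob, a.act g (F p) ∈ J (a.act₀ g p.1) (a.act₀ g p.2)) :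
    aAct a g F ∈ aAddSubgroup C J :=
  sum_mem fun p _ => single_mem_aAddSubgroup (h p)

end

namespace IsSemicatPartialAction

variable {𝒢 : AlgGroupoid G} {C : RSemicat.{u, v, w} R Ob} {a : SemicatActionData R G C}

lemma objects (hpa : IsSemicatPartialAction 𝒢 C a) :
    𝒢.IsPartialActionOn Set.univ a.D₀ a.act₀ :=
  hpa.1

lemma isIdealIn (hpa : IsSemicatPartialAction 𝒢 C a) (g : G) :
    C.IsIdealIn (a.I g) (a.I (𝒢.r g)) :=
  hpa.2.2.1 g

lemma isIdeal (hpa : IsSemicatPartialAction 𝒢 C a) (g : G) : C.IsIdeal (a.I (𝒢.r g)) :=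
  hpa.2.2.2.1 g

lemma comp_mem (hpa : IsSemicatPartialAction 𝒢 C a) {g : G} {z y x : Ob} {u : C.Hom z y}
    {f : C.Hom y x} (hu : u ∈ a.I g z y) (hf : f ∈ a.I g y x) : C.comp u f ∈ a.I g z x :=
  (hpa.isIdealIn g).2.1 z y x u f ((hpa.isIdealIn g).1 z y hu) hf

lemma mem_D₀_of_ne_zero (hpa : IsSemicatPartialAction 𝒢 C a) {g : G} {y x : Ob}
    {f : C.Hom y x} (hf : f ∈ a.I g y x) (h0 : f ≠ 0) : y ∈ a.D₀ g ∧ x ∈ a.D₀ g := by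
  by_contra hyx
  rw [hpa.2.1 g y x hyx, Submodule.mem_bot] at hf
  exact h0 hf

lemma act_mem (hpa : IsSemicatPartialAction 𝒢 C a) {g : G} {y x : Ob} {f : C.Hom y x}
    (hf : f ∈ a.I (𝒢.inv g) y x) : a.act g f ∈ a.I g (a.act₀ g y) (a.act₀ g x) :=
  hpa.2.2.2.2.1 g y x f hf

lemma act_add (hpa : IsSemicatPartialAction 𝒢 C a) {g : G} {y x : Ob} {f f' : C.Hom y x}
    (hf : f ∈ a.I (𝒢.inv g) y x) (hf' : f' ∈ a.I (𝒢.inv g) y x) :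
    a.act g (f + f') = a.act g f + a.act g f' :=
  hpa.2.2.2.2.2.1 g y x f f' hf hf'

lemma act_zero (hpa : IsSemicatPartialAction 𝒢 C a) (g : G) (y x : Ob) :
    a.act g (0 : C.Hom y x) = 0 := by
  have h := hpa.act_add (g := g) (zero_mem (a.I (𝒢.inv g) y x)) (zero_mem _)
  rwa [add_zero, left_eq_add] at h

lemma act_ne_zero (hpa : IsSemicatPartialAction 𝒢 C a) {g : G} {y x : Ob} {f : C.Hom y x}
    (hf : f ∈ a.I (𝒢.inv g) y x) (h0 : f ≠ 0) : a.act g f ≠ 0 := fun h =>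
  h0 (hpa.2.2.2.2.2.2.2.1 g y x f 0 hf (zero_mem _) (h.trans (hpa.act_zero g y x).symm))

lemma act_comp (hpa : IsSemicatPartialAction 𝒢 C a) {g : G} {z y x : Ob} {f : C.Hom z y}
    {f' : C.Hom y x} (hf : f ∈ a.I (𝒢.inv g) z y) (hf' : f' ∈ a.I (𝒢.inv g) y x) :
    a.act g (C.comp f f') = C.comp (a.act g f) (a.act g f') :=
  hpa.2.2.2.2.2.2.2.2.2.1 g z y x f f' hf hf'

lemma act_unit (hpa : IsSemicatPartialAction 𝒢 C a) {e : G} (he : e ∈ 𝒢.units) {y x : Ob}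
    {f : C.Hom y x} (hf : f ∈ a.I e y x) : HEq (a.act e f) f :=
  hpa.2.2.2.2.2.2.2.2.2.2.1 e he y x f hf

lemma act_mem_of_comp (hpa : IsSemicatPartialAction 𝒢 C a) {g h : G} (hc : 𝒢.comp g h)
    {y x : Ob} {f : C.Hom y x} (hfh : f ∈ a.I h y x) (hfg : f ∈ a.I (𝒢.inv g) y x) :
    a.act (𝒢.inv h) f ∈
      a.I (𝒢.inv (𝒢.mul g h)) (a.act₀ (𝒢.inv h) y) (a.act₀ (𝒢.inv h) x) :=
  hpa.2.2.2.2.2.2.2.2.2.2.2.1 g h hc y x f hfh hfg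

lemma act_act (hpa : IsSemicatPartialAction 𝒢 C a) {g h : G} (hc : 𝒢.comp g h) {y x : Ob}
    {f : C.Hom y x} (hf : f ∈ a.I (𝒢.inv h) y x)
    (hhf : a.act h f ∈ a.I (𝒢.inv g) (a.act₀ h y) (a.act₀ h x)) :
    HEq (a.act g (a.act h f)) (a.act (𝒢.mul g h) f) :=
  hpa.2.2.2.2.2.2.2.2.2.2.2.2 g h hc y x f hf hhf

lemma act_inv_act (hpa : IsSemicatPartialAction 𝒢 C a) {g : G} {y x : Ob} {f : C.Hom y x}
    (hf : f ∈ a.I (𝒢.inv g) y x) : HEq (a.act (𝒢.inv g) (a.act g f)) f := by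
  have hgf : a.act g f ∈ a.I (𝒢.inv (𝒢.inv g)) (a.act₀ g y) (a.act₀ g x) := by
    rw [𝒢.inv_inv']
    exact hpa.act_mem hf
  have hfd : f ∈ a.I (𝒢.d g) y x := by
    rw [← AlgGroupoid.r_inv]
    exact (hpa.isIdealIn _).1 y x hf
  exact (hpa.act_act (𝒢.comp_inv_left g) hf hgf).trans (hpa.act_unit ⟨g, rfl⟩ hfd)

lemma aAct_single (hpa : IsSemicatPartialAction 𝒢 C a) (g : G) (p : Ob × Ob)
    (v : C.Hom p.1 p.2) :
    aAct a g (DFinsupp.single p v) =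
      DFinsupp.single (⟨a.act₀ g p.1, a.act₀ g p.2⟩ : Ob × Ob) (a.act g v) :=
  DFinsupp.sum_single_index (by rw [hpa.act_zero, DFinsupp.single_zero])

lemma aAct_eq_sum (hpa : IsSemicatPartialAction 𝒢 C a) (g : G) (F : aHom C) :
    aAct a g F = ∑ p ∈ F.support, aAct a g (DFinsupp.single p (F p)) := by
  simp only [hpa.aAct_single]
  rfl

lemma aAct_mem (hpa : IsSemicatPartialAction 𝒢 C a) {g : G} {F : aHom C}
    (hF : F ∈ aIdealSet C a (𝒢.inv g)) : aAct a g F ∈ aIdealSet C a g :=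
  aAct_mem_aAddSubgroup fun p => hpa.act_mem (hF p)

lemma aAct_mem_of_comp (hpa : IsSemicatPartialAction 𝒢 C a) {g h : G} (hc : 𝒢.comp g h)
    {F : aHom C} (hFg : F ∈ aIdealSet C a (𝒢.inv g)) (hFh : F ∈ aIdealSet C a h) :
    aAct a (𝒢.inv h) F ∈ aIdealSet C a (𝒢.inv (𝒢.mul g h)) :=
  aAct_mem_aAddSubgroup fun p => hpa.act_mem_of_comp hc (hFh p) (hFg p)

lemma aAct_add (hpa : IsSemicatPartialAction 𝒢 C a) {g : G} {F K : aHom C}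
    (hF : F ∈ aIdealSet C a (𝒢.inv g)) (hK : K ∈ aIdealSet C a (𝒢.inv g)) :
    aAct a g (F + K) = aAct a g F + aAct a g K := by
  have hzero : ∀ p ∈ F.support ∪ K.support,
      (DFinsupp.single (⟨a.act₀ g p.1, a.act₀ g p.2⟩ : Ob × Ob) (a.act g 0) : aHom C) = 0 :=
    fun p _ => by rw [hpa.act_zero, DFinsupp.single_zero]
  rw [aAct, aAct, aAct, DFinsupp.sum_of_support_subset DFinsupp.support_add hzero,
    DFinsupp.sum_of_support_subset Finset.subset_union_left hzero,
    DFinsupp.sum_of_support_subset Finset.subset_union_right hzero, ← Finset.sum_add_distrib]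
  refine Finset.sum_congr rfl fun p _ => ?_
  rw [DFinsupp.add_apply, hpa.act_add (hF p) (hK p), DFinsupp.single_add]

lemma aAct_sum (hpa : IsSemicatPartialAction 𝒢 C a) {g : G} {ι : Type*} (s : Finset ι)
    (f : ι → aHom C) (hf : ∀ i ∈ s, f i ∈ aIdealSet C a (𝒢.inv g)) :
    aAct a g (∑ i ∈ s, f i) = ∑ i ∈ s, aAct a g (f i) := by
  induction s using Finset.induction_on with
  | empty => exact aAct_zero g
  | insert i s hi ih =>
    have hs : ∀ j ∈ s, f j ∈ aIdealSet C a (𝒢.inv g) := fun j hj =>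
      hf j (Finset.mem_insert_of_mem hj)
    rw [Finset.sum_insert hi, Finset.sum_insert hi,
      hpa.aAct_add (hf i (Finset.mem_insert_self i s))
        (sum_mem (S := aAddSubgroup C (a.I (𝒢.inv g))) hs), ih hs]

lemma aAct_apply_act₀ (hpa : IsSemicatPartialAction 𝒢 C a) {g : G} {F : aHom C}
    (hF : F ∈ aIdealSet C a (𝒢.inv g)) {y x : Ob} (hy : y ∈ a.D₀ (𝒢.inv g))
    (hx : x ∈ a.D₀ (𝒢.inv g)) :
    aAct a g F (⟨a.act₀ g y, a.act₀ g x⟩ : Ob × Ob) = a.act g (F (y, x)) := by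
  rw [aAct, DFinsupp.sum_apply, DFinsupp.sum]
  refine (Finset.sum_eq_single (y, x) (fun p hp hne => DFinsupp.single_eq_of_ne fun h => hne ?_)
    fun hyx => ?_).trans DFinsupp.single_eq_same
  · obtain ⟨hp₁, hp₂⟩ := hpa.mem_D₀_of_ne_zero (hF p) (DFinsupp.mem_support_iff.1 hp)
    rw [Prod.mk.injEq] at h
    exact Prod.ext (hpa.objects.act_injOn g hp₁ hy h.1.symm)
      (hpa.objects.act_injOn g hp₂ hx h.2.symm)
  · rw [DFinsupp.notMem_support_iff.1 hyx, hpa.act_zero, DFinsupp.single_zero,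
      DFinsupp.zero_apply]

lemma aAct_inv_aAct (hpa : IsSemicatPartialAction 𝒢 C a) {g : G} {F : aHom C}
    (hF : F ∈ aIdealSet C a (𝒢.inv g)) : aAct a (𝒢.inv g) (aAct a g F) = F := by
  have hterm : ∀ p ∈ F.support, aAct a (𝒢.inv g)
      (DFinsupp.single (⟨a.act₀ g p.1, a.act₀ g p.2⟩ : Ob × Ob) (a.act g (F p))) =
        DFinsupp.single p (F p) := fun p hp => by
    obtain ⟨hp₁, hp₂⟩ := hpa.mem_D₀_of_ne_zero (hF p) (DFinsupp.mem_support_iff.1 hp)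
    rw [hpa.aAct_single]
    exact single_eq_single_of_heq (hpa.objects.act_inv_act hp₁) (hpa.objects.act_inv_act hp₂)
      (hpa.act_inv_act (hF p))
  calc aAct a (𝒢.inv g) (aAct a g F)
      = ∑ p ∈ F.support, aAct a (𝒢.inv g)
          (DFinsupp.single (⟨a.act₀ g p.1, a.act₀ g p.2⟩ : Ob × Ob) (a.act g (F p))) :=
        hpa.aAct_sum _ _ fun p _ => single_mem_aAddSubgroup <| by
          rw [𝒢.inv_inv']
          exact hpa.act_mem (hF p)
    _ = F := (Finset.sum_congr rfl hterm).trans DFinsupp.sum_single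

lemma aAct_unit (hpa : IsSemicatPartialAction 𝒢 C a) {e : G} (he : e ∈ 𝒢.units) {F : aHom C}
    (hF : F ∈ aIdealSet C a e) : aAct a e F = F := by
  refine (Finset.sum_congr rfl fun p hp => ?_).trans DFinsupp.sum_single
  obtain ⟨hp₁, hp₂⟩ := hpa.mem_D₀_of_ne_zero (hF p) (DFinsupp.mem_support_iff.1 hp)
  exact single_eq_single_of_heq (hpa.objects.act_unit he hp₁) (hpa.objects.act_unit he hp₂)
    (hpa.act_unit he (hF p))

lemma aAct_aAct (hpa : IsSemicatPartialAction 𝒢 C a) {g h : G} (hc : 𝒢.comp g h)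
    {F : aHom C} (hF : F ∈ aIdealSet C a (𝒢.inv h))
    (hK : aAct a h F ∈ aIdealSet C a (𝒢.inv g)) :
    aAct a g (aAct a h F) = aAct a (𝒢.mul g h) F := by
  have hterm : ∀ p ∈ F.support,
      DFinsupp.single (⟨a.act₀ h p.1, a.act₀ h p.2⟩ : Ob × Ob) (a.act h (F p)) ∈
        aIdealSet C a (𝒢.inv g) ∧
      aAct a g (DFinsupp.single (⟨a.act₀ h p.1, a.act₀ h p.2⟩ : Ob × Ob) (a.act h (F p))) =
        DFinsupp.single (⟨a.act₀ (𝒢.mul g h) p.1, a.act₀ (𝒢.mul g h) p.2⟩ : Ob × Ob)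
          (a.act (𝒢.mul g h) (F p)) := fun p hp => by
    have hFp := DFinsupp.mem_support_iff.1 hp
    obtain ⟨hp₁, hp₂⟩ := hpa.mem_D₀_of_ne_zero (hF p) hFp
    have hact : a.act h (F p) ∈ a.I (𝒢.inv g) (a.act₀ h p.1) (a.act₀ h p.2) := by
      rw [← hpa.aAct_apply_act₀ hF hp₁ hp₂]
      exact hK (a.act₀ h p.1, a.act₀ h p.2)
    obtain ⟨hq₁, hq₂⟩ := hpa.mem_D₀_of_ne_zero hact (hpa.act_ne_zero (hF p) hFp)
    refine ⟨single_mem_aAddSubgroup hact, ?_⟩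
    rw [hpa.aAct_single]
    exact single_eq_single_of_heq (hpa.objects.act_act hc hp₁ hq₁)
      (hpa.objects.act_act hc hp₂ hq₂) (hpa.act_act hc (hF p) hact)
  calc aAct a g (aAct a h F)
      = ∑ p ∈ F.support, aAct a g
          (DFinsupp.single (⟨a.act₀ h p.1, a.act₀ h p.2⟩ : Ob × Ob) (a.act h (F p))) :=
        hpa.aAct_sum _ _ fun p hp => (hterm p hp).1
    _ = aAct a (𝒢.mul g h) F := Finset.sum_congr rfl fun p hp => (hterm p hp).2

lemma aAct_aAct_inv (hpa : IsSemicatPartialAction 𝒢 C a) {g : G} {K : aHom C}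
    (hK : K ∈ aIdealSet C a g) : aAct a g (aAct a (𝒢.inv g) K) = K := by
  have h := hpa.aAct_inv_aAct (g := 𝒢.inv g) (by rwa [𝒢.inv_inv'])
  rwa [𝒢.inv_inv'] at h

lemma aAct_aMul_single (hpa : IsSemicatPartialAction 𝒢 C a) {g : G} {p q : Ob × Ob}
    {v : C.Hom p.1 p.2} {w : C.Hom q.1 q.2}
    (hv : v ∈ a.I (𝒢.inv g) p.1 p.2) (hw : w ∈ a.I (𝒢.inv g) q.1 q.2) (hv0 : v ≠ 0)
    (hw0 : w ≠ 0) :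
    aAct a g (aMul C (DFinsupp.single p v) (DFinsupp.single q w)) =
      aMul C (aAct a g (DFinsupp.single p v)) (aAct a g (DFinsupp.single q w)) := by
  obtain ⟨p₁, p₂⟩ := p
  obtain ⟨q₁, q₂⟩ := q
  rw [hpa.aAct_single, hpa.aAct_single, aMul_single_single, aMul_single_single]
  dsimp only
  by_cases h : p₂ = q₁
  · subst h
    rw [dif_pos rfl, dif_pos rfl, hpa.aAct_single, cast_eq, cast_eq, hpa.act_comp hv hw]
  · have hne : a.act₀ g p₂ ≠ a.act₀ g q₁ := fun h' => h <| hpa.objects.act_injOn g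
      (hpa.mem_D₀_of_ne_zero hv hv0).2 (hpa.mem_D₀_of_ne_zero hw hw0).1 h'
    rw [dif_neg h, dif_neg hne, aAct_zero]

lemma aAct_aMul (hpa : IsSemicatPartialAction 𝒢 C a) {g : G} {F K : aHom C}
    (hF : F ∈ aIdealSet C a (𝒢.inv g)) (hK : K ∈ aIdealSet C a (𝒢.inv g)) :
    aAct a g (aMul C F K) = aMul C (aAct a g F) (aAct a g K) := by
  have hmem : ∀ p ∈ F.support, ∀ q ∈ K.support,
      aMul C (DFinsupp.single p (F p)) (DFinsupp.single q (K q)) ∈ aIdealSet C a (𝒢.inv g) :=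
    fun p _ q _ => aMul_mem_aAddSubgroup (fun _ _ _ _ _ => hpa.comp_mem)
      (single_mem_aAddSubgroup (hF p)) (single_mem_aAddSubgroup (hK q))
  rw [aMul_eq_sum, hpa.aAct_sum _ _ fun p hp =>
      sum_mem (S := aAddSubgroup C (a.I (𝒢.inv g))) (hmem p hp),
    hpa.aAct_eq_sum g F, hpa.aAct_eq_sum g K, aMul_sum_left]
  refine Finset.sum_congr rfl fun p hp => ?_
  rw [hpa.aAct_sum _ _ (hmem p hp), aMul_sum_right]
  exact Finset.sum_congr rfl fun q hq => hpa.aAct_aMul_single (hF p) (hK q)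
    (DFinsupp.mem_support_iff.1 hp) (DFinsupp.mem_support_iff.1 hq)

end IsSemicatPartialAction

theorem stmt12_general {R : Type u} [CommRing R] {G : Type u₂} {Ob : Type v}
    (𝒢 : AlgGroupoid G) (C : RSemicat.{u, v, w} R Ob) (a : SemicatActionData R G C)
    (hpa : IsSemicatPartialAction 𝒢 C a) :
    IsRingPartialAction 𝒢 (aMul C) (fun g => aIdealSet C a g) (fun g => aAct a g) := by
  refine ⟨fun g => ?_, fun g => (hpa.isIdealIn g).isRingIdealPair,
    fun _ _ hF => hpa.aAct_mem hF, fun _ _ hF => hpa.aAct_inv_aAct hF,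
    fun g K hK => ⟨_, hpa.aAct_mem (by rwa [𝒢.inv_inv']), hpa.aAct_aAct_inv hK⟩,
    fun _ _ hF _ hK => hpa.aAct_add hF hK, fun _ _ hF _ hK => hpa.aAct_aMul hF hK,
    fun _ he _ hF => hpa.aAct_unit he hF, fun _ _ hc _ hFg hFh => hpa.aAct_mem_of_comp hc hFg hFh,
    fun _ _ hc _ hF hK => hpa.aAct_aAct hc hF hK⟩
  rw [← coe_aAddSubgroup_top]
  exact (hpa.isIdeal g).isIdealIn_top.isRingIdealPair

/-- Let `α` be an associative partial action of a groupoid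
`𝒢` on an `R`-semicategory `C`. Then the family
`α_{a(C)} = (a(C)_g, α_g)` with `a(C)_g = ⊕_{x,y} _yI^g_x` and `α_g`
induced componentwise by `α^g` is a partial action of `𝒢` on the ring
`a(C)`; in particular `a(C)_{r g}` is a two-sided ideal of `a(C)`,
`a(C)_g` a two-sided ideal of `a(C)_{r g}` and each `α_g` a ring
isomorphism `a(C)_{g⁻¹} → a(C)_g`. -/
theorem stmt12 {R : Type u} [CommRing R] {G : Type u₂} {Ob : Type v}
    (𝒢 : AlgGroupoid G) (C : RSemicat.{u, v, w} R Ob) (a : SemicatActionData R G C)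
    (hpa : IsSemicatPartialAction 𝒢 C a) (hassoc : SkewAssoc 𝒢 C a) :
    IsRingPartialAction 𝒢 (aMul C) (fun g => aIdealSet C a g) (fun g => aAct a g) :=
  stmt12_general 𝒢 C a hpa
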